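/- If a stream contains k events of the iterated type B (all within the time window), together with one matching A event before them and one matching C event after them, then the iteration pattern SEQ(A, B+, C) under skip-till-any-match has exactly 2^k - 1 matches, one for each nonempty subset of the B events. -/
import Mathlib


/-- If a window contains `k` B-events, one matching A-event before them and one
matching C-event after them, then SEQ(A, B+, C) under skip-till-any-match has
exactly `2^k - 1` matches: one per nonempty subset of the B-events. -/
theorem iteration_match_count (B : Finset ℕ) (k : ℕ) (a c : ℕ)
    (hk : B.card = k)
    (ha : ∀ b ∈ B, a < b) (hc : ∀ b ∈ B, b < c) :
    (B.powerset.filter fun S => S.Nonempty).card = 2 ^ k - 1 := by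
  have h : B.powerset.filter (fun S => S.Nonempty) = B.powerset \ {∅} := by
    ext S
    simp [Finset.nonempty_iff_ne_empty, and_comm]
  rw [h, Finset.card_sdiff_of_subset (by simp), Finset.card_powerset, hk, Finset.card_singleton]
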